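/- arXiv:2303.17792 — 3 statements merged into one kernel-verified Lean document; each statement's English description precedes it below -/
import Mathlib

section
/- If P is a set of n points in general position in the plane and P' ⊆ P with |P'| ≥ 3, and χ(D(P)) = |P| − 2, then χ(D(P')) = |P'| − 2. -/
open scoped Classical

/-- The closed segment associated to an unordered pair of points. -/
noncomputable def seg : Sym2 (ℝ × ℝ) → Set (ℝ × ℝ) :=
  Sym2.lift ⟨fun p q => segment ℝ p q, fun p q => segment_symm ℝ p q⟩

lemma seg_nonempty (s : Sym2 (ℝ × ℝ)) : (seg s).Nonempty := by
  induction s using Sym2.ind with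
  | _ p q => exact ⟨p, by simp [seg, left_mem_segment]⟩

/-- A point set is in general position if no three (distinct) of its points are collinear. -/
def GenPos (P : Set (ℝ × ℝ)) : Prop :=
  ∀ a ∈ P, ∀ b ∈ P, ∀ c ∈ P, a ≠ b → a ≠ c → b ≠ c →
    ¬ Collinear ℝ ({a, b, c} : Set (ℝ × ℝ))

/-- A point set is in convex position if every point is a vertex of the convex hull. -/
def ConvexPos (P : Set (ℝ × ℝ)) : Prop :=
  ∀ p ∈ P, p ∉ convexHull ℝ (P \ {p})

/-- Vertices of the disjointness graph: unordered pairs of distinct points of `P`. -/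
def SegOn (P : Set (ℝ × ℝ)) : Type :=
  {s : Sym2 (ℝ × ℝ) // (∀ p ∈ s, p ∈ P) ∧ ¬ s.IsDiag}

/-- The disjointness graph of segments of `P`: segments adjacent iff disjoint. -/
noncomputable def DisjGraph (P : Set (ℝ × ℝ)) : SimpleGraph (SegOn P) where
  Adj a b := seg a.1 ∩ seg b.1 = ∅
  symm := by constructor; intro a b h; rwa [Set.inter_comm]
  loopless := by
    constructor
    intro a h
    rw [Set.inter_self] at h
    exact (seg_nonempty a.1).ne_empty h

/-- Two (unordered pairs of points seen as) segments cross if they intersect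
but share no endpoint. -/
def Crosses (s t : Sym2 (ℝ × ℝ)) : Prop :=
  (seg s ∩ seg t).Nonempty ∧ ∀ p, p ∈ s → p ∉ t

/-- A colour class is a star if no two of its segments cross. -/
def IsStarClass {P : Set (ℝ × ℝ)} {α : Type} (γ : (DisjGraph P).Coloring α) (c : α) : Prop :=
  ∀ s t : SegOn P, γ s = c → γ t = c → ¬ Crosses s.1 t.1

/-- `v` is an apex of the colour class `c`: every segment of the class is incident with `v`. -/
def IsApex {P : Set (ℝ × ℝ)} {α : Type} (γ : (DisjGraph P).Coloring α) (c : α) (v : ℝ × ℝ) : Prop :=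
  ∀ s : SegOn P, γ s = c → v ∈ s.1


lemma mem_seg {s : Sym2 (ℝ × ℝ)} {p : ℝ × ℝ} (h : p ∈ s) : p ∈ seg s := by
  induction s using Sym2.ind with
  | _ x y =>
    rcases Sym2.mem_iff.mp h with rfl | rfl
    · simpa [seg] using left_mem_segment ℝ p y
    · simpa [seg] using right_mem_segment ℝ x p

lemma not_adj_of_shared {P : Set (ℝ × ℝ)} {a b : SegOn P} {v : ℝ × ℝ}
    (hva : v ∈ a.1) (hvb : v ∈ b.1) : ¬ (DisjGraph P).Adj a b := by
  intro hadj
  have h1 : v ∈ seg a.1 ∩ seg b.1 := ⟨mem_seg hva, mem_seg hvb⟩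
  have h2 : seg a.1 ∩ seg b.1 = ∅ := hadj
  simp [h2] at h1

noncomputable def idx0 (Q : Finset (ℝ × ℝ)) (p : ℝ × ℝ) : ℕ :=
  if h : p ∈ Q then (Q.equivFin ⟨p, h⟩ : ℕ) else 0

lemma idx0_lt {Q : Finset (ℝ × ℝ)} {p : ℝ × ℝ} (hp : p ∈ Q) : idx0 Q p < Q.card := by
  simp only [idx0, dif_pos hp]
  exact (Q.equivFin ⟨p, hp⟩).2

lemma idx0_inj {Q : Finset (ℝ × ℝ)} {p q : ℝ × ℝ} (hp : p ∈ Q) (hq : q ∈ Q)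
    (h : idx0 Q p = idx0 Q q) : p = q := by
  simp only [idx0, dif_pos hp, dif_pos hq] at h
  have := Q.equivFin.injective (Fin.val_injective h)
  exact congrArg Subtype.val this

noncomputable def gcol (Q : Finset (ℝ × ℝ)) : Sym2 (ℝ × ℝ) → ℕ :=
  Sym2.lift ⟨fun p q => min (idx0 Q p) (idx0 Q q), fun p q => min_comm _ _⟩

lemma shared (Q : Finset (ℝ × ℝ)) (h3 : 3 ≤ Q.card) (a b : SegOn ↑Q)
    (h : min (gcol Q a.1) (Q.card - 3) = min (gcol Q b.1) (Q.card - 3)) :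
    ∃ v, v ∈ a.1 ∧ v ∈ b.1 := by
  obtain ⟨s, hs⟩ := a
  obtain ⟨t, ht⟩ := b
  simp only at h ⊢
  revert hs ht h
  induction s using Sym2.ind with
  | _ p q =>
  induction t using Sym2.ind with
  | _ r u =>
  intro hs ht h
  have hp : p ∈ Q := hs.1 p (by simp)
  have hq : q ∈ Q := hs.1 q (by simp)
  have hr : r ∈ Q := ht.1 r (by simp)
  have hu : u ∈ Q := ht.1 u (by simp)
  have hpq : idx0 Q p ≠ idx0 Q q := fun e => hs.2 (by simp [Sym2.mk_isDiag_iff, idx0_inj hp hq e])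
  have hru : idx0 Q r ≠ idx0 Q u := fun e => ht.2 (by simp [Sym2.mk_isDiag_iff, idx0_inj hr hu e])
  simp only [gcol, Sym2.lift_mk] at h
  have hip := idx0_lt hp; have hiq := idx0_lt hq
  have hir := idx0_lt hr; have hiu := idx0_lt hu
  have key : idx0 Q p = idx0 Q r ∨ idx0 Q p = idx0 Q u ∨
      idx0 Q q = idx0 Q r ∨ idx0 Q q = idx0 Q u := by omega
  rcases key with e | e | e | e
  · exact ⟨p, by simp, by simp [idx0_inj hp hr e]⟩
  · exact ⟨p, by simp, by simp [idx0_inj hp hu e]⟩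
  · exact ⟨q, by simp, by simp [idx0_inj hq hr e]⟩
  · exact ⟨q, by simp, by simp [idx0_inj hq hu e]⟩

lemma colorable_sub (Q : Finset (ℝ × ℝ)) (h3 : 3 ≤ Q.card) :
    (DisjGraph ↑Q).Colorable (Q.card - 2) := by
  refine ⟨SimpleGraph.Coloring.mk
    (fun s => ⟨min (gcol Q s.1) (Q.card - 3), by omega⟩) ?_⟩
  intro a b hadj heq
  have h : min (gcol Q a.1) (Q.card - 3) = min (gcol Q b.1) (Q.card - 3) :=
    congrArg Fin.val heq
  obtain ⟨v, hva, hvb⟩ := shared Q h3 a b h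
  exact not_adj_of_shared hva hvb hadj

noncomputable def outPt (P' : Finset (ℝ × ℝ)) (s : Sym2 (ℝ × ℝ)) : ℝ × ℝ :=
  if h : ∃ p, p ∈ s ∧ p ∉ P' then h.choose else 0

lemma outPt_spec {P' : Finset (ℝ × ℝ)} {s : Sym2 (ℝ × ℝ)}
    (h : ∃ p, p ∈ s ∧ p ∉ P') : outPt P' s ∈ s ∧ outPt P' s ∉ P' := by
  simp only [outPt, dif_pos h]
  exact h.choose_spec

lemma transfer (P P' : Finset (ℝ × ℝ)) (hsub : P' ⊆ P) {m : ℕ}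
    (h : (DisjGraph ↑P').Colorable m) :
    (DisjGraph ↑P).Colorable (m + (P \ P').card) := by
  obtain ⟨γ⟩ := h
  have key : (DisjGraph ↑P).Colorable (Fintype.card (Fin m ⊕ ↥(P \ P'))) := by
    refine SimpleGraph.Coloring.colorable (SimpleGraph.Coloring.mk
      (fun s => if hc : ∀ p ∈ s.1, p ∈ P' then
          Sum.inl (γ ⟨s.1, ⟨fun p hp => Finset.mem_coe.mpr (hc p hp), s.2.2⟩⟩)
        else
          Sum.inr ⟨outPt P' s.1, by
            have hex : ∃ p, p ∈ s.1 ∧ p ∉ P' := by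
              by_contra hcc; push_neg at hcc; exact hc fun p hp => hcc p hp
            have := outPt_spec hex
            exact Finset.mem_sdiff.mpr ⟨Finset.mem_coe.mp (s.2.1 _ this.1), this.2⟩⟩) ?_)
    intro a b hadj heq
    by_cases ha : ∀ p ∈ a.1, p ∈ P' <;> by_cases hb : ∀ p ∈ b.1, p ∈ P'
    · rw [dif_pos ha, dif_pos hb] at heq
      have heq' := Sum.inl_injective heq
      apply γ.valid ?_ heq'
      exact hadj
    · rw [dif_pos ha, dif_neg hb] at heq; simp at heq
    · rw [dif_neg ha, dif_pos hb] at heq; simp at heq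
    · rw [dif_neg ha, dif_neg hb] at heq
      simp only [Sum.inr.injEq, Subtype.mk.injEq] at heq
      have hexa : ∃ p, p ∈ a.1 ∧ p ∉ P' := by
        by_contra hcc; push_neg at hcc; exact ha fun p hp => hcc p hp
      have hexb : ∃ p, p ∈ b.1 ∧ p ∉ P' := by
        by_contra hcc; push_neg at hcc; exact hb fun p hp => hcc p hp
      exact not_adj_of_shared (outPt_spec hexa).1 (heq ▸ (outPt_spec hexb).1) hadj
  have hcard : Fintype.card (Fin m ⊕ ↥(P \ P')) = m + (P \ P').card := by
    simp [Fintype.card_sum]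
  rwa [hcard] at key

theorem stmt1 (P P' : Finset (ℝ × ℝ)) (hsub : P' ⊆ P) (hcard : 3 ≤ P'.card)
    (hgp : GenPos ↑P)
    (hχ : (DisjGraph ↑P).chromaticNumber = ((P.card - 2 : ℕ) : ℕ∞)) :
    (DisjGraph ↑P').chromaticNumber = ((P'.card - 2 : ℕ) : ℕ∞) := by
  have hc' : P'.card ≤ P.card := Finset.card_le_card hsub
  have hub := colorable_sub P' hcard
  have hle : (DisjGraph ↑P').chromaticNumber ≤ ((P'.card - 2 : ℕ) : ℕ∞) :=
    hub.chromaticNumber_le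
  by_contra hne
  have hlt : (DisjGraph ↑P').chromaticNumber < ((P'.card - 2 : ℕ) : ℕ∞) :=
    lt_of_le_of_ne hle hne
  have hle3 : (DisjGraph ↑P').chromaticNumber ≤ ((P'.card - 3 : ℕ) : ℕ∞) := by
    have he : ((P'.card - 2 : ℕ) : ℕ∞) = ((P'.card - 3 : ℕ) : ℕ∞) + 1 := by
      rw [← Nat.cast_one, ← Nat.cast_add]
      congr 1
      omega
    rw [he] at hlt
    exact Order.le_of_lt_add_one hlt
  have hcol3 := SimpleGraph.chromaticNumber_le_iff_colorable.mp hle3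
  have hcolP := transfer P P' hsub hcol3
  have hcolP' : (DisjGraph ↑P).Colorable (P.card - 3) := by
    have hcc : P'.card - 3 + (P \ P').card = P.card - 3 := by
      rw [Finset.card_sdiff_of_subset hsub]; omega
    rwa [hcc] at hcolP
  have hfin := hcolP'.chromaticNumber_le
  rw [hχ] at hfin
  have : (P.card - 2 : ℕ) ≤ (P.card - 3 : ℕ) := Nat.cast_le.mp hfin
  omega
end

section
/- Let γ be a proper 4-coloring of the disjointness graph D(C₅) of 5 points in convex position such that every one of the 5 points is the apex of some star color class. Then there exist two points p, q of C₅ such that the single segment pq forms a color class by itself (a 2-star) and neither p nor q is an apex of any other star color class of γ. -/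
open scoped Classical

-- ===== helpers =====
lemma mem_three_false {a b c : ℝ×ℝ} {z : Sym2 (ℝ×ℝ)} (ha : a ∈ z) (hb : b ∈ z) (hc : c ∈ z)
    (hab : a ≠ b) (hac : a ≠ c) (hbc : b ≠ c) : False := by
  have hz := (Sym2.mem_and_mem_iff hab).mp ⟨ha, hb⟩
  rw [hz, Sym2.mem_iff] at hc
  rcases hc with h | h
  · exact hac h.symm
  · exact hbc h.symm

def mkSeg {P : Set (ℝ×ℝ)} (p q : ℝ×ℝ) (hp : p ∈ P) (hq : q ∈ P) (hpq : p ≠ q) : SegOn P :=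
  ⟨s(p,q), ⟨fun x hx => by rcases Sym2.mem_iff.mp hx with h|h <;> subst h <;> assumption,
    by simpa [Sym2.mk_isDiag_iff] using hpq⟩⟩

@[simp] lemma mkSeg_fst {P : Set (ℝ×ℝ)} (p q : ℝ×ℝ) (hp : p ∈ P) (hq : q ∈ P) (hpq : p ≠ q) :
    (mkSeg p q hp hq hpq).1 = s(p,q) := rfl

lemma same_color_nonempty {P : Set (ℝ×ℝ)} (γ : (DisjGraph P).Coloring (Fin 4)) {s t : SegOn P}
    (h : γ s = γ t) : (seg s.1 ∩ seg t.1).Nonempty := by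
  by_contra hn
  rw [Set.not_nonempty_iff_eq_empty] at hn
  exact γ.valid hn h

lemma fin4_cover : ∀ (a b c d x : Fin 4), a≠b → a≠c → a≠d → b≠c → b≠d → c≠d →
    x = a ∨ x = b ∨ x = c ∨ x = d := by decide

lemma fin4_exists : ∀ a b c : Fin 4, ∃ d, d ≠ a ∧ d ≠ b ∧ d ≠ c := by decide

-- three distinct apexes of a nonempty class: impossible
lemma tri_apex {P : Set (ℝ×ℝ)} (γ : (DisjGraph P).Coloring (Fin 4)) {c₀ : Fin 4} {a b x : ℝ×ℝ}
    (hE : ∃ w, γ w = c₀) (ha : IsApex γ c₀ a) (hb : IsApex γ c₀ b) (hx : IsApex γ c₀ x)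
    (hab : a ≠ b) (hax : a ≠ x) (hbx : b ≠ x) : False := by
  obtain ⟨w, hw⟩ := hE
  exact mem_three_false (ha w hw) (hb w hw) (hx w hw) hab hax hbx

lemma caseI_core {P : Set (ℝ×ℝ)} (γ : (DisjGraph P).Coloring (Fin 4)) {p q x y z : ℝ×ℝ}
    (hqP : q ∈ P) (hxP : x ∈ P)
    (hpq : p ≠ q) (hpx : p ≠ x) (hqx : q ≠ x) (hyq : y ≠ q) (hyx : y ≠ x)
    (hzq : z ≠ q) (hzx : z ≠ x)
    {c cx cy cz : Fin 4} (h1 : c ≠ cx) (h2 : c ≠ cy) (h3 : c ≠ cz)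
    (h4 : cx ≠ cy) (h5 : cx ≠ cz) (h6 : cy ≠ cz)
    (hcp : IsApex γ c p) (hyy : IsApex γ cy y) (hzz : IsApex γ cz z)
    (hthr : IsApex γ cx p) : False := by
  set w := mkSeg q x hqP hxP hqx with hw
  rcases fin4_cover c cx cy cz (γ w) h1 h2 h3 h4 h5 h6 with h|h|h|h
  · rcases Sym2.mem_iff.mp (hcp w h) with h'|h'
    · exact hpq h'
    · exact hpx h'
  · rcases Sym2.mem_iff.mp (hthr w h) with h'|h'
    · exact hpq h'
    · exact hpx h'
  · rcases Sym2.mem_iff.mp (hyy w h) with h'|h'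
    · exact hyq h'
    · exact hyx h'
  · rcases Sym2.mem_iff.mp (hzz w h) with h'|h'
    · exact hzq h'
    · exact hzx h'

lemma caseII_main {P : Finset (ℝ×ℝ)} (γ : (DisjGraph ↑P).Coloring (Fin 4))
    {p q r s t : ℝ×ℝ}
    (hp : p ∈ P) (hq : q ∈ P) (hr : r ∈ P) (hs : s ∈ P) (ht : t ∈ P)
    (hpq : p≠q) (hpr : p≠r) (hps : p≠s) (hpt : p≠t) (hqr : q≠r) (hqs : q≠s) (hqt : q≠t)
    (hrs : r≠s) (hrt : r≠t) (hst : s≠t)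
    {c c' c'' : Fin 4}
    (hcE : ∃ w, γ w = c) (hc'E : ∃ w, γ w = c') (hc''E : ∃ w, γ w = c'')
    (hcp : IsApex γ c p) (hcq : IsApex γ c q)
    (hc'r : IsApex γ c' r) (hc's : IsApex γ c' s)
    (hc''t : IsApex γ c'' t) :
    ∃ p ∈ P, ∃ q ∈ P, p ≠ q ∧ ∃ e : SegOn ↑P, e.1 = s(p, q) ∧
      (∀ t, γ t = γ e → t = e) ∧
      ∀ c, c ≠ γ e → (∃ s, γ s = c) → IsStarClass γ c →
        ¬ IsApex γ c p ∧ ¬ IsApex γ c q := by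
  have hpP : p ∈ (↑P : Set (ℝ×ℝ)) := hp
  have hqP : q ∈ (↑P : Set (ℝ×ℝ)) := hq
  have hrP : r ∈ (↑P : Set (ℝ×ℝ)) := hr
  have hsP : s ∈ (↑P : Set (ℝ×ℝ)) := hs
  -- colour distinctness
  have hcc' : c ≠ c' := fun h =>
    tri_apex γ hcE hcp hcq (h ▸ hc'r) hpq hpr hqr
  have hcc'' : c ≠ c'' := fun h =>
    tri_apex γ hcE hcp hcq (h ▸ hc''t) hpq hpt hqt
  have hc'c'' : c' ≠ c'' := fun h =>
    tri_apex γ hc'E hc'r hc's (h ▸ hc''t) hrs hrt hst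
  obtain ⟨d, hdc, hdc', hdc''⟩ := fin4_exists c c' c''
  have hcov : ∀ x : Fin 4, x = c ∨ x = c' ∨ x = c'' ∨ x = d := fun x =>
    fin4_cover c c' c'' d x hcc' hcc'' hdc.symm hc'c'' hdc'.symm hdc''.symm
  -- the fourth class is not a star class
  have hdstar : ¬ IsStarClass γ d := by
    intro hstar
    set e1 := mkSeg p r hpP hrP hpr with he1
    set e2 := mkSeg q s hqP hsP hqs with he2
    have h1 : γ e1 = d := by
      rcases hcov (γ e1) with h|h|h|h
      · rcases Sym2.mem_iff.mp (hcq e1 h) with h'|h'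
        · exact absurd h'.symm hpq
        · exact absurd h' hqr
      · rcases Sym2.mem_iff.mp (hc's e1 h) with h'|h'
        · exact absurd h'.symm hps
        · exact absurd h'.symm hrs
      · rcases Sym2.mem_iff.mp (hc''t e1 h) with h'|h'
        · exact absurd h'.symm hpt
        · exact absurd h'.symm hrt
      · exact h
    have h2 : γ e2 = d := by
      rcases hcov (γ e2) with h|h|h|h
      · rcases Sym2.mem_iff.mp (hcp e2 h) with h'|h'
        · exact absurd h' hpq
        · exact absurd h' hps
      · rcases Sym2.mem_iff.mp (hc'r e2 h) with h'|h'
        · exact absurd h'.symm hqr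
        · exact absurd h' hrs
      · rcases Sym2.mem_iff.mp (hc''t e2 h) with h'|h'
        · exact absurd h'.symm hqt
        · exact absurd h'.symm hst
      · exact h
    refine hstar e1 e2 h1 h2 ⟨same_color_nonempty γ (h1.trans h2.symm), ?_⟩
    intro x hx hx'
    rcases Sym2.mem_iff.mp hx with h'|h' <;> rcases Sym2.mem_iff.mp hx' with h''|h''
    · exact hpq (h'.symm.trans h'')
    · exact hps (h'.symm.trans h'')
    · exact hqr (h''.symm.trans h')
    · exact hrs (h'.symm.trans h'')
  by_cases hA : IsApex γ c'' p
  · -- answer (r, s)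
    obtain ⟨e', he'⟩ := hc'E
    have he'1 : e'.1 = s(r, s) := (Sym2.mem_and_mem_iff hrs).mp ⟨hc'r e' he', hc's e' he'⟩
    refine ⟨r, hr, s, hs, hrs, e', he'1, ?_, ?_⟩
    · intro t₀ ht₀
      have : t₀.1 = s(r, s) :=
        (Sym2.mem_and_mem_iff hrs).mp ⟨hc'r t₀ (ht₀.trans he'), hc's t₀ (ht₀.trans he')⟩
      exact Subtype.ext (this.trans he'1.symm)
    · intro c₀ hne hEx hstar
      rcases hcov c₀ with h|h|h|h
      · subst h
        constructor
        · exact fun hap => tri_apex γ hEx hcp hcq hap hpq hpr hqr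
        · exact fun hap => tri_apex γ hEx hcp hcq hap hpq hps hqs
      · exact absurd (h.trans he'.symm) hne
      · subst h
        constructor
        · exact fun hap => tri_apex γ hEx hA hc''t hap hpt hpr hrt.symm
        · exact fun hap => tri_apex γ hEx hA hc''t hap hpt hps hst.symm
      · exact absurd (h ▸ hstar) hdstar
  · by_cases hB : IsApex γ c'' q
    · -- answer (r, s) again
      obtain ⟨e', he'⟩ := hc'E
      have he'1 : e'.1 = s(r, s) := (Sym2.mem_and_mem_iff hrs).mp ⟨hc'r e' he', hc's e' he'⟩
      refine ⟨r, hr, s, hs, hrs, e', he'1, ?_, ?_⟩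
      · intro t₀ ht₀
        have : t₀.1 = s(r, s) :=
          (Sym2.mem_and_mem_iff hrs).mp ⟨hc'r t₀ (ht₀.trans he'), hc's t₀ (ht₀.trans he')⟩
        exact Subtype.ext (this.trans he'1.symm)
      · intro c₀ hne hEx hstar
        rcases hcov c₀ with h|h|h|h
        · subst h
          constructor
          · exact fun hap => tri_apex γ hEx hcp hcq hap hpq hpr hqr
          · exact fun hap => tri_apex γ hEx hcp hcq hap hpq hps hqs
        · exact absurd (h.trans he'.symm) hne
        · subst h
          constructor
          · exact fun hap => tri_apex γ hEx hB hc''t hap hqt hqr hrt.symm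
          · exact fun hap => tri_apex γ hEx hB hc''t hap hqt hqs hst.symm
        · exact absurd (h ▸ hstar) hdstar
    · -- answer (p, q)
      obtain ⟨e, he⟩ := hcE
      have he1 : e.1 = s(p, q) := (Sym2.mem_and_mem_iff hpq).mp ⟨hcp e he, hcq e he⟩
      refine ⟨p, hp, q, hq, hpq, e, he1, ?_, ?_⟩
      · intro t₀ ht₀
        have : t₀.1 = s(p, q) :=
          (Sym2.mem_and_mem_iff hpq).mp ⟨hcp t₀ (ht₀.trans he), hcq t₀ (ht₀.trans he)⟩
        exact Subtype.ext (this.trans he1.symm)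
      · intro c₀ hne hEx hstar
        rcases hcov c₀ with h|h|h|h
        · exact absurd (h.trans he.symm) hne
        · subst h
          constructor
          · exact fun hap => tri_apex γ hEx hc'r hc's hap hrs hpr.symm hps.symm
          · exact fun hap => tri_apex γ hEx hc'r hc's hap hrs hqr.symm hqs.symm
        · subst h
          exact ⟨hA, hB⟩
        · exact absurd (h ▸ hstar) hdstar

theorem stmt3 (P : Finset (ℝ × ℝ)) (hcard : P.card = 5) (hgp : GenPos ↑P)
    (hconv : ConvexPos ↑P) (γ : (DisjGraph ↑P).Coloring (Fin 4))
    (hsurj : Function.Surjective (fun s => γ s))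
    (hapex : ∀ p ∈ P, ∃ c, (∃ s, γ s = c) ∧ IsStarClass γ c ∧ IsApex γ c p) :
    ∃ p ∈ P, ∃ q ∈ P, p ≠ q ∧ ∃ e : SegOn ↑P, e.1 = s(p, q) ∧
      (∀ t, γ t = γ e → t = e) ∧
      ∀ c, c ≠ γ e → (∃ s, γ s = c) → IsStarClass γ c →
        ¬ IsApex γ c p ∧ ¬ IsApex γ c q := by
  classical
  set F : ℝ × ℝ → Fin 4 := fun a => if h : a ∈ P then (hapex a h).choose else 0 with hF
  have hFs : ∀ a, ∀ h : a ∈ P,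
      (∃ s, γ s = F a) ∧ IsStarClass γ (F a) ∧ IsApex γ (F a) a := by
    intro a h
    simp only [hF, dif_pos h]
    exact (hapex a h).choose_spec
  obtain ⟨p, hp, q, hq, hpq, hfpq⟩ := Finset.exists_ne_map_eq_of_card_lt_of_maps_to
    (show (Finset.univ : Finset (Fin 4)).card < P.card by simp [hcard])
    (fun a _ => Finset.mem_univ (F a))
  set c := F p with hc
  have hcE : ∃ w, γ w = c := (hFs p hp).1
  have hcp : IsApex γ c p := (hFs p hp).2.2
  have hcq : IsApex γ c q := by rw [hfpq]; exact (hFs q hq).2.2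
  have hsub : ({p, q} : Finset (ℝ × ℝ)) ⊆ P := by
    intro x hx
    rcases Finset.mem_insert.mp hx with h | h
    · subst h; exact hp
    · rw [Finset.mem_singleton.mp h]; exact hq
  have h3 : (P \ {p, q}).card = 3 := by
    rw [Finset.card_sdiff_of_subset hsub, Finset.card_pair hpq, hcard]
  obtain ⟨r, s0, t0, hrs, hrt, hst, hQ⟩ := Finset.card_eq_three.mp h3
  have hrmem : r ∈ P \ {p, q} := by rw [hQ]; simp
  have hsmem : s0 ∈ P \ {p, q} := by rw [hQ]; simp
  have htmem : t0 ∈ P \ {p, q} := by rw [hQ]; simp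
  rw [Finset.mem_sdiff] at hrmem hsmem htmem
  obtain ⟨hr, hr'⟩ := hrmem
  obtain ⟨hs, hs'⟩ := hsmem
  obtain ⟨ht, ht'⟩ := htmem
  simp only [Finset.mem_insert, Finset.mem_singleton, not_or] at hr' hs' ht'
  have hpr : p ≠ r := fun h => hr'.1 h.symm
  have hqr : q ≠ r := fun h => hr'.2 h.symm
  have hps : p ≠ s0 := fun h => hs'.1 h.symm
  have hqs : q ≠ s0 := fun h => hs'.2 h.symm
  have hpt : p ≠ t0 := fun h => ht'.1 h.symm
  have hqt : q ≠ t0 := fun h => ht'.2 h.symm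
  have hrE := (hFs r hr).1
  have hsE := (hFs s0 hs).1
  have htE := (hFs t0 ht).1
  have hra : IsApex γ (F r) r := (hFs r hr).2.2
  have hsa : IsApex γ (F s0) s0 := (hFs s0 hs).2.2
  have hta : IsApex γ (F t0) t0 := (hFs t0 ht).2.2
  have hccr : c ≠ F r := fun h => tri_apex γ hcE hcp hcq (h ▸ hra) hpq hpr hqr
  have hccs : c ≠ F s0 := fun h => tri_apex γ hcE hcp hcq (h ▸ hsa) hpq hps hqs
  have hcct : c ≠ F t0 := fun h => tri_apex γ hcE hcp hcq (h ▸ hta) hpq hpt hqt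
  by_cases h12 : F r = F s0
  · exact caseII_main γ hp hq hr hs ht hpq hpr hps hpt hqr hqs hqt hrs hrt hst
      hcE hrE htE hcp hcq hra (h12 ▸ hsa) hta
  · by_cases h13 : F r = F t0
    · exact caseII_main γ hp hq hr ht hs hpq hpr hpt hps hqr hqt hqs hrt hrs hst.symm
        hcE hrE hsE hcp hcq hra (h13 ▸ hta) hsa
    · by_cases h23 : F s0 = F t0
      · exact caseII_main γ hp hq hs ht hr hpq hps hpt hpr hqs hqt hqr hst hrs.symm hrt.symm
          hcE hsE hrE hcp hcq hsa (h23 ▸ hta) hra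
      · -- case I: all four colours distinct, answer (p, q)
        obtain ⟨e, he⟩ := hcE
        have he1 : e.1 = s(p, q) := (Sym2.mem_and_mem_iff hpq).mp ⟨hcp e he, hcq e he⟩
        refine ⟨p, hp, q, hq, hpq, e, he1, ?_, ?_⟩
        · intro t₁ ht₁
          have : t₁.1 = s(p, q) :=
            (Sym2.mem_and_mem_iff hpq).mp ⟨hcp t₁ (ht₁.trans he), hcq t₁ (ht₁.trans he)⟩
          exact Subtype.ext (this.trans he1.symm)
        · intro c₀ hne _hEx _hstar
          have hqP : q ∈ (↑P : Set (ℝ × ℝ)) := hq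
          have hpP : p ∈ (↑P : Set (ℝ × ℝ)) := hp
          have hrP : r ∈ (↑P : Set (ℝ × ℝ)) := hr
          have hsP : s0 ∈ (↑P : Set (ℝ × ℝ)) := hs
          have htP : t0 ∈ (↑P : Set (ℝ × ℝ)) := ht
          rcases fin4_cover c (F r) (F s0) (F t0) c₀ hccr hccs hcct h12 h13 h23 with h|h|h|h
          · exact absurd (h.trans he.symm) hne
          · subst h
            constructor
            · exact fun thr => (caseI_core γ hqP hrP hpq hpr hqr hqs.symm hrs.symm
                hqt.symm hrt.symm hccr hccs hcct h12 h13 h23 hcp hsa hta thr).elim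
            · exact fun thr => (caseI_core γ hpP hrP hpq.symm hqr hpr hps.symm hrs.symm
                hpt.symm hrt.symm hccr hccs hcct h12 h13 h23 hcq hsa hta thr).elim
          · subst h
            constructor
            · exact fun thr => (caseI_core γ hqP hsP hpq hps hqs hqr.symm hrs
                hqt.symm hst.symm hccs hccr hcct (Ne.symm h12) h23 h13 hcp hra hta thr).elim
            · exact fun thr => (caseI_core γ hpP hsP hpq.symm hqs hps hpr.symm hrs
                hpt.symm hst.symm hccs hccr hcct (Ne.symm h12) h23 h13 hcq hra hta thr).elim
          · subst h
            constructor
            · exact fun thr => (caseI_core γ hqP htP hpq hpt hqt hqr.symm hrt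
                hqs.symm hst hcct hccr hccs (Ne.symm h13) (Ne.symm h23) h12 hcp hra hsa thr).elim
            · exact fun thr => (caseI_core γ hpP htP hpq.symm hqt hpt hpr.symm hrt
                hps.symm hst hcct hccr hccs (Ne.symm h13) (Ne.symm h23) h12 hcq hra hsa thr).elim
end

section
/- In any proper coloring of the disjointness graph of 5 points in convex position with 4 colors where all five points are apices of stars, at most two color classes are 2-stars (singleton segments), and at least one color class is a 2-star. -/
open scoped Classical

set_option maxRecDepth 10000


lemma collinear3_of_mem_segment {u v z : ℝ × ℝ} (h : z ∈ segment ℝ u v) :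
    Collinear ℝ ({u, v, z} : Set (ℝ × ℝ)) := by
  obtain ⟨a, b, ha, hb, hab, hz⟩ := h
  rw [collinear_iff_of_mem (Set.mem_insert u _)]
  refine ⟨v - u, fun w hw => ?_⟩
  simp only [Set.mem_insert_iff, Set.mem_singleton_iff] at hw
  rcases hw with rfl | rfl | rfl
  · exact ⟨0, by simp⟩
  · exact ⟨1, by rw [vadd_eq_add]; module⟩
  · refine ⟨b, ?_⟩
    have haa : a = 1 - b := by linarith
    subst haa
    rw [vadd_eq_add, ← hz]; module

lemma det_ne_zero_of_not_collinear {a b c : ℝ × ℝ}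
    (hL : ¬ Collinear ℝ ({a, b, c} : Set (ℝ × ℝ))) :
    (b.1 - a.1) * (c.2 - a.2) - (b.2 - a.2) * (c.1 - a.1) ≠ 0 := by
  intro hdet
  apply hL
  by_cases hab : b = a
  · have hset : ({a, b, c} : Set (ℝ × ℝ)) = {a, c} := by rw [hab, Set.insert_idem]
    rw [hset]; exact collinear_pair ℝ a c
  · rw [collinear_iff_of_mem (Set.mem_insert a _)]
    refine ⟨b - a, fun w hw => ?_⟩
    simp only [Set.mem_insert_iff, Set.mem_singleton_iff] at hw
    have hba : b.1 - a.1 ≠ 0 ∨ b.2 - a.2 ≠ 0 := by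
      by_contra h
      push_neg at h
      exact hab (Prod.ext (by linarith [h.1]) (by linarith [h.2]))
    rcases hw with rfl | rfl | rfl
    · exact ⟨0, by simp⟩
    · exact ⟨1, by rw [vadd_eq_add]; module⟩
    · rcases hba with h | h
      · refine ⟨(w.1 - a.1) / (b.1 - a.1), ?_⟩
        rw [vadd_eq_add, Prod.ext_iff]
        constructor
        · simp only [Prod.fst_add, Prod.smul_fst, Prod.fst_sub, smul_eq_mul]
          field_simp
          ring
        · simp only [Prod.snd_add, Prod.smul_snd, Prod.snd_sub, smul_eq_mul]
          field_simp
          linear_combination hdet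
      · refine ⟨(w.2 - a.2) / (b.2 - a.2), ?_⟩
        rw [vadd_eq_add, Prod.ext_iff]
        constructor
        · simp only [Prod.fst_add, Prod.smul_fst, Prod.fst_sub, smul_eq_mul]
          field_simp
          linear_combination -hdet
        · simp only [Prod.snd_add, Prod.smul_snd, Prod.snd_sub, smul_eq_mul]
          field_simp
          ring

lemma coeff_zero_of_not_collinear {a b c : ℝ × ℝ}
    (hL : ¬ Collinear ℝ ({a, b, c} : Set (ℝ × ℝ))) {r q : ℝ}
    (h1 : r * (b.1 - a.1) = q * (c.1 - a.1)) (h2 : r * (b.2 - a.2) = q * (c.2 - a.2)) :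
    r = 0 := by
  have hdet := det_ne_zero_of_not_collinear hL
  have hz : r * ((b.1 - a.1) * (c.2 - a.2) - (b.2 - a.2) * (c.1 - a.1)) = 0 := by
    linear_combination (c.2 - a.2) * h1 - (c.1 - a.1) * h2
  rcases mul_eq_zero.mp hz with h | h
  · exact h
  · exact absurd h hdet

lemma cross_pairings (a b c d : ℝ × ℝ)
    (h1 : ¬ Collinear ℝ ({a, b, c} : Set (ℝ × ℝ)))
    (h2 : ¬ Collinear ℝ ({a, c, d} : Set (ℝ × ℝ)))
    (hx : (segment ℝ a b ∩ segment ℝ c d).Nonempty)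
    (hy : (segment ℝ a c ∩ segment ℝ b d).Nonempty) : False := by
  obtain ⟨x, hx1, hx2⟩ := hx
  obtain ⟨y, hy1, hy2⟩ := hy
  have hx1m := hx1
  have hx2m := hx2
  have hy1m := hy1
  have hperm1 : ¬ Collinear ℝ ({a, c, b} : Set (ℝ × ℝ)) := by
    intro h; exact h1 (h.subset (by intro w hw; simp at hw ⊢; tauto))
  have hperm2 : ¬ Collinear ℝ ({c, d, a} : Set (ℝ × ℝ)) := by
    intro h; exact h2 (h.subset (by intro w hw; simp at hw ⊢; tauto))
  obtain ⟨p1, q1, hp1, hq1, hs1, he1⟩ := hx1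
  obtain ⟨p2, q2, hp2, hq2, hs2, he2⟩ := hx2
  obtain ⟨p3, q3, hp3, hq3, hs3, he3⟩ := hy1
  obtain ⟨p4, q4, hp4, hq4, hs4, he4⟩ := hy2
  have hp1' : p1 = 1 - q1 := by linarith
  have hp2' : p2 = 1 - q2 := by linarith
  have hp3' : p3 = 1 - q3 := by linarith
  have hp4' : p4 = 1 - q4 := by linarith
  subst hp1' hp2' hp3' hp4'
  -- endpoint facts
  have hq1pos : 0 < q1 := by
    rcases lt_or_eq_of_le hq1 with h | h
    · exact h
    · exfalso
      have hxa : x = a := by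
        rw [← he1, ← h]; simp
      rw [hxa] at hx2m
      exact hperm2 (collinear3_of_mem_segment hx2m)
  have hq2pos : 0 < q2 := by
    rcases lt_or_eq_of_le hq2 with h | h
    · exact h
    · exfalso
      have hxc : x = c := by rw [← he2, ← h]; simp
      rw [hxc] at hx1m
      exact h1 (collinear3_of_mem_segment hx1m)
  have hq4pos : 0 < q4 := by
    rcases lt_or_eq_of_le hq4 with h | h
    · exact h
    · exfalso
      have hyb : y = b := by rw [← he4, ← h]; simp
      rw [hyb] at hy1m
      exact hperm1 (collinear3_of_mem_segment hy1m)
  have hp4pos : q4 < 1 := by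
    rcases lt_or_eq_of_le hp4 with h | h
    · linarith
    · exfalso
      have hyd : y = d := by
        rw [← he4]
        have : q4 = 1 := by linarith
        rw [this]; simp
      rw [hyd] at hy1m
      exact h2 (collinear3_of_mem_segment hy1m)
  -- coordinate equations
  have e11 : (1 - q1) * a.1 + q1 * b.1 = x.1 := by
    have := congrArg Prod.fst he1; simpa using this
  have e12 : (1 - q1) * a.2 + q1 * b.2 = x.2 := by
    have := congrArg Prod.snd he1; simpa using this
  have e21 : (1 - q2) * c.1 + q2 * d.1 = x.1 := by
    have := congrArg Prod.fst he2; simpa using this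
  have e22 : (1 - q2) * c.2 + q2 * d.2 = x.2 := by
    have := congrArg Prod.snd he2; simpa using this
  have e31 : (1 - q3) * a.1 + q3 * c.1 = y.1 := by
    have := congrArg Prod.fst he3; simpa using this
  have e32 : (1 - q3) * a.2 + q3 * c.2 = y.2 := by
    have := congrArg Prod.snd he3; simpa using this
  have e41 : (1 - q4) * b.1 + q4 * d.1 = y.1 := by
    have := congrArg Prod.fst he4; simpa using this
  have e42 : (1 - q4) * b.2 + q4 * d.2 = y.2 := by
    have := congrArg Prod.snd he4; simpa using this
  have hc1 : (q4 * q1 + q2 * (1 - q4)) * (b.1 - a.1)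
      = (q2 * q3 + q4 * (1 - q2)) * (c.1 - a.1) := by
    linear_combination q4 * e11 - q4 * e21 - q2 * e31 + q2 * e41
  have hc2 : (q4 * q1 + q2 * (1 - q4)) * (b.2 - a.2)
      = (q2 * q3 + q4 * (1 - q2)) * (c.2 - a.2) := by
    linear_combination q4 * e12 - q4 * e22 - q2 * e32 + q2 * e42
  have hr0 : q4 * q1 + q2 * (1 - q4) = 0 :=
    coeff_zero_of_not_collinear h1 hc1 hc2
  nlinarith [mul_pos hq4pos hq1pos, mul_nonneg hq2pos.le (by linarith : (0:ℝ) ≤ 1 - q4)]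

def Epair : Fin 10 → Fin 5 × Fin 5 :=
  ![(0,1),(0,2),(0,3),(0,4),(1,2),(1,3),(1,4),(2,3),(2,4),(3,4)]

def clash (i j : Fin 5) (e : Fin 10) : Prop :=
  (i = (Epair e).1 ∧ j = (Epair e).2) ∨ (i = (Epair e).2 ∧ j = (Epair e).1)

instance (i j : Fin 5) (e : Fin 10) : Decidable (clash i j e) := by
  unfold clash; infer_instance

def quads : List (Fin 5 × Fin 5 × Fin 5 × Fin 5) :=
  [(0,1,2,3),(0,1,3,2),(0,2,3,1),
   (0,1,2,4),(0,1,4,2),(0,2,4,1),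
   (0,1,3,4),(0,1,4,3),(0,3,4,1),
   (0,2,3,4),(0,2,4,3),(0,3,4,2),
   (1,2,3,4),(1,2,4,3),(1,3,4,2)]

def avoids (q : Fin 5 × Fin 5 × Fin 5 × Fin 5) (e : Fin 10) : Prop :=
  ¬ clash q.1 q.2.1 e ∧ ¬ clash q.2.2.1 q.2.2.2 e ∧
  ¬ clash q.1 q.2.2.1 e ∧ ¬ clash q.2.1 q.2.2.2 e

instance (q : Fin 5 × Fin 5 × Fin 5 × Fin 5) (e : Fin 10) : Decidable (avoids q e) := by
  unfold avoids; infer_instance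

lemma quads_distinct : ∀ q ∈ quads,
    q.1 ≠ q.2.1 ∧ q.1 ≠ q.2.2.1 ∧ q.1 ≠ q.2.2.2 ∧
    q.2.1 ≠ q.2.2.1 ∧ q.2.1 ≠ q.2.2.2 ∧ q.2.2.1 ≠ q.2.2.2 := by decide

lemma edge_exists : ∀ u v : Fin 5, u ≠ v →
    ∃ e : Fin 10, Epair e = (u, v) ∨ Epair e = (v, u) := by decide

lemma core : ∀ x y z : Fin 10, ∃ q ∈ quads, avoids q x ∧ avoids q y ∧ avoids q z := by decide

lemma seg_ne_of_not_clash {p : Fin 5 → ℝ × ℝ} (hpinj : Function.Injective p)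
    {i j u v : Fin 5} {e : Fin 10}
    (hE : Epair e = (u, v) ∨ Epair e = (v, u))
    (hcl : ¬ clash i j e) : s(p i, p j) ≠ s(p u, p v) := by
  intro h
  rw [Sym2.eq_iff] at h
  have hiju : (i = u ∧ j = v) ∨ (i = v ∧ j = u) := by
    rcases h with ⟨h1, h2⟩ | ⟨h1, h2⟩
    · exact Or.inl ⟨hpinj h1, hpinj h2⟩
    · exact Or.inr ⟨hpinj h1, hpinj h2⟩
  apply hcl
  unfold clash
  rcases hE with hE | hE <;> rw [hE] <;> simp only [Prod.fst, Prod.snd] <;> tauto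

def mkSegOn (P : Finset (ℝ × ℝ)) (x y : ℝ × ℝ) (hx : x ∈ P) (hy : y ∈ P) (hxy : x ≠ y) :
    SegOn ↑P :=
  ⟨s(x, y),
    ⟨fun q hq => by
      rcases Sym2.mem_iff.mp hq with rfl | rfl
      · exact hx
      · exact hy,
    by rw [Sym2.mk_isDiag_iff]; exact hxy⟩⟩

lemma fin4_contra (x1 x2 x3 y1 y2 : Fin 4) (h1 : x1 ≠ x2) (h2 : x1 ≠ x3) (h3 : x2 ≠ x3)
    (h4 : y1 ≠ x1) (h5 : y1 ≠ x2) (h6 : y1 ≠ x3) (h7 : y2 ≠ x1) (h8 : y2 ≠ x2)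
    (h9 : y2 ≠ x3) (h10 : y1 ≠ y2) : False := by
  have v1 := x1.isLt; have v2 := x2.isLt; have v3 := x3.isLt
  have v4 := y1.isLt; have v5 := y2.isLt
  simp only [Ne, Fin.ext_iff] at h1 h2 h3 h4 h5 h6 h7 h8 h9 h10
  omega

theorem stmt17 (P : Finset (ℝ × ℝ)) (hcard : P.card = 5) (hgp : GenPos ↑P)
    (hconv : ConvexPos ↑P) (γ : (DisjGraph ↑P).Coloring (Fin 4))
    (hsurj : Function.Surjective (fun s => γ s))
    (hapex : ∀ p ∈ P, ∃ c, (∃ s, γ s = c) ∧ IsStarClass γ c ∧ IsApex γ c p) :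
    Set.ncard {c : Fin 4 | ∃ s : SegOn ↑P, ∀ t, γ t = c ↔ t = s} ≤ 2 ∧
    ∃ c : Fin 4, ∃ s : SegOn ↑P, ∀ t, γ t = c ↔ t = s := by
  classical
  -- enumeration of the five points
  have hlen : P.toList.length = 5 := by rw [Finset.length_toList, hcard]
  let p : Fin 5 → ℝ × ℝ := fun i => P.toList.get (Fin.cast hlen.symm i)
  have hpmem : ∀ i, p i ∈ P := fun i => Finset.mem_toList.mp (P.toList.get_mem _)
  have hpinj : Function.Injective p := by
    intro i j h
    have h2 := (List.Nodup.get_inj_iff P.nodup_toList).mp h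
    rw [Fin.ext_iff] at h2 ⊢
    exact h2
  have hpsurj : ∀ q ∈ P, ∃ i, p i = q := by
    intro q hq
    obtain ⟨n, hn⟩ := List.mem_iff_get.mp (Finset.mem_toList.mpr hq)
    exact ⟨Fin.cast hlen n, hn⟩
  have hrep : ∀ s : SegOn ↑P, ∃ u v : Fin 5, u ≠ v ∧ s.1 = s(p u, p v) := by
    intro s
    obtain ⟨x, y, hxy⟩ : ∃ x y, s.1 = s(x, y) := Sym2.ind (fun x y => ⟨x, y, rfl⟩) s.1
    have hx : x ∈ P := s.2.1 x (by rw [hxy]; exact Sym2.mem_mk_left x y)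
    have hy : y ∈ P := s.2.1 y (by rw [hxy]; exact Sym2.mem_mk_right x y)
    have hne : x ≠ y := fun h => s.2.2 (by rw [hxy, Sym2.mk_isDiag_iff]; exact h)
    obtain ⟨u, hu⟩ := hpsurj x hx
    obtain ⟨v, hv⟩ := hpsurj y hy
    refine ⟨u, v, ?_, ?_⟩
    · intro h; subst h; exact hne (hu.symm.trans hv)
    · rw [hxy, ← hu, ← hv]
  constructor
  · -- at most two singleton classes
    by_contra hgt
    push_neg at hgt
    have hfin : {c : Fin 4 | ∃ s : SegOn ↑P, ∀ t, γ t = c ↔ t = s}.Finite := Set.toFinite _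
    rw [Set.ncard_eq_toFinset_card _ hfin] at hgt
    obtain ⟨c1, c2, c3, hc1, hc2, hc3, h12, h13, h23⟩ := Finset.two_lt_card_iff.mp hgt
    rw [Set.Finite.mem_toFinset] at hc1 hc2 hc3
    obtain ⟨s1, hs1⟩ := hc1
    obtain ⟨s2, hs2⟩ := hc2
    obtain ⟨s3, hs3⟩ := hc3
    obtain ⟨u1, v1, huv1, hr1⟩ := hrep s1
    obtain ⟨u2, v2, huv2, hr2⟩ := hrep s2
    obtain ⟨u3, v3, huv3, hr3⟩ := hrep s3
    obtain ⟨e1, hE1⟩ := edge_exists u1 v1 huv1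
    obtain ⟨e2, hE2⟩ := edge_exists u2 v2 huv2
    obtain ⟨e3, hE3⟩ := edge_exists u3 v3 huv3
    obtain ⟨q, hq, hav1, hav2, hav3⟩ := core e1 e2 e3
    obtain ⟨hdab, hdac, hdad, hdbc, hdbd, hdcd⟩ := quads_distinct q hq
    obtain ⟨a, b, c, d⟩ := q
    simp only at hdab hdac hdad hdbc hdbd hdcd
    obtain ⟨hab1, hcd1, hac1, hbd1⟩ := hav1
    obtain ⟨hab2, hcd2, hac2, hbd2⟩ := hav2
    obtain ⟨hab3, hcd3, hac3, hbd3⟩ := hav3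
    have hpAB : p a ≠ p b := fun h => hdab (hpinj h)
    have hpAC : p a ≠ p c := fun h => hdac (hpinj h)
    have hpAD : p a ≠ p d := fun h => hdad (hpinj h)
    have hpBC : p b ≠ p c := fun h => hdbc (hpinj h)
    have hpBD : p b ≠ p d := fun h => hdbd (hpinj h)
    have hpCD : p c ≠ p d := fun h => hdcd (hpinj h)
    have hmem : ∀ i : Fin 5, p i ∈ (↑P : Set (ℝ × ℝ)) := fun i => hpmem i
    have hnc1 : ¬ Collinear ℝ ({p a, p b, p c} : Set (ℝ × ℝ)) :=
      hgp (p a) (hmem a) (p b) (hmem b) (p c) (hmem c) hpAB hpAC hpBC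
    have hnc2 : ¬ Collinear ℝ ({p a, p c, p d} : Set (ℝ × ℝ)) :=
      hgp (p a) (hmem a) (p c) (hmem c) (p d) (hmem d) hpAC hpAD hpCD
    have hdisj : segment ℝ (p a) (p b) ∩ segment ℝ (p c) (p d) = ∅ ∨
        segment ℝ (p a) (p c) ∩ segment ℝ (p b) (p d) = ∅ := by
      by_contra h
      push_neg at h
      exact cross_pairings (p a) (p b) (p c) (p d) hnc1 hnc2 h.1 h.2
    have key : ∀ (i j : Fin 5) (hij : p i ≠ p j) (cx : Fin 4) (sx : SegOn ↑P)
        (ux vx : Fin 5) (ex : Fin 10),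
        (∀ t, γ t = cx ↔ t = sx) → sx.1 = s(p ux, p vx) →
        (Epair ex = (ux, vx) ∨ Epair ex = (vx, ux)) → ¬ clash i j ex →
        γ (mkSegOn P (p i) (p j) (hpmem i) (hpmem j) hij) ≠ cx := by
      intro i j hij cx sx ux vx ex hcx hsx hE hcl h
      have ht : mkSegOn P (p i) (p j) (hpmem i) (hpmem j) hij = sx := (hcx _).mp h
      have hval : s(p i, p j) = s(p ux, p vx) := by
        rw [← hsx]; exact congrArg Subtype.val ht
      exact seg_ne_of_not_clash hpinj hE hcl hval
    rcases hdisj with hcase | hcase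
    · set t := mkSegOn P (p a) (p b) (hpmem a) (hpmem b) hpAB with ht
      set u := mkSegOn P (p c) (p d) (hpmem c) (hpmem d) hpCD with hu
      have hadj : (DisjGraph ↑P).Adj t u := hcase
      exact fin4_contra c1 c2 c3 (γ t) (γ u) h12 h13 h23
        (key a b hpAB c1 s1 u1 v1 e1 hs1 hr1 hE1 hab1)
        (key a b hpAB c2 s2 u2 v2 e2 hs2 hr2 hE2 hab2)
        (key a b hpAB c3 s3 u3 v3 e3 hs3 hr3 hE3 hab3)
        (key c d hpCD c1 s1 u1 v1 e1 hs1 hr1 hE1 hcd1)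
        (key c d hpCD c2 s2 u2 v2 e2 hs2 hr2 hE2 hcd2)
        (key c d hpCD c3 s3 u3 v3 e3 hs3 hr3 hE3 hcd3)
        (γ.valid hadj)
    · set t := mkSegOn P (p a) (p c) (hpmem a) (hpmem c) hpAC with ht
      set u := mkSegOn P (p b) (p d) (hpmem b) (hpmem d) hpBD with hu
      have hadj : (DisjGraph ↑P).Adj t u := hcase
      exact fin4_contra c1 c2 c3 (γ t) (γ u) h12 h13 h23
        (key a c hpAC c1 s1 u1 v1 e1 hs1 hr1 hE1 hac1)
        (key a c hpAC c2 s2 u2 v2 e2 hs2 hr2 hE2 hac2)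
        (key a c hpAC c3 s3 u3 v3 e3 hs3 hr3 hE3 hac3)
        (key b d hpBD c1 s1 u1 v1 e1 hs1 hr1 hE1 hbd1)
        (key b d hpBD c2 s2 u2 v2 e2 hs2 hr2 hE2 hbd2)
        (key b d hpBD c3 s3 u3 v3 e3 hs3 hr3 hE3 hbd3)
        (γ.valid hadj)
  · -- at least one singleton class
    choose f hf using hapex
    have hcl : (Finset.univ : Finset (Fin 4)).card < P.card := by
      rw [hcard]; simp
    obtain ⟨x, hx, y, hy, hxy, hgxy⟩ :=
      Finset.exists_ne_map_eq_of_card_lt_of_maps_to hcl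
        (f := fun q => if h : q ∈ P then f q h else 0)
        (fun q _ => Finset.mem_univ _)
    rw [dif_pos hx, dif_pos hy] at hgxy
    obtain ⟨⟨s0, hs0⟩, _, hapx⟩ := hf x hx
    have hapy : IsApex γ (f x hx) y := by
      have h2 := (hf y hy).2.2
      rwa [← hgxy] at h2
    refine ⟨f x hx, s0, fun t => ⟨fun ht => ?_, fun ht => by rw [ht]; exact hs0⟩⟩
    have h1 : t.1 = s(x, y) := (Sym2.mem_and_mem_iff hxy).mp ⟨hapx t ht, hapy t ht⟩
    have h2 : s0.1 = s(x, y) := (Sym2.mem_and_mem_iff hxy).mp ⟨hapx s0 hs0, hapy s0 hs0⟩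
    exact Subtype.ext (h1.trans h2.symm)
end
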